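/- Let n ≥ 2 and A ∈ M_n(ℂ) nonzero nilpotent, with V as above (V v₂ = v₁, V v₁ = v₂, V v_j = 0 for j ≥ 3, where A v₂ = v₁, A v₁ = 0). Then the spectral radius satisfies ρ(A + ζV) ≥ √(|ζ||1+ζ|) for all ζ ∈ ℂ, and in particular ρ(A + ζV)/|ζ| → ∞ as ζ → 0. -/

import Mathlib

/-! On `span {v₁, v₂}` the matrix `A + ζV` sends `v₁ ↦ ζ v₂` and `v₂ ↦ (1 + ζ) v₁`, so for
`λ² = ζ(1 + ζ)` the vector `λ v₁ + ζ v₂` is an eigenvector with eigenvalue `λ`, whence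
`ρ(A + ζV) ≥ |λ| = √(|ζ||1 + ζ|)`. Dividing by `|ζ|` leaves `√(|1 + ζ| / |ζ|)`, which blows up
as `ζ → 0`. -/

open Matrix Filter Topology

noncomputable def rho {n : ℕ} (A : Matrix (Fin n) (Fin n) ℂ) : ℝ :=
  sSup ((fun z : ℂ => ‖z‖) '' spectrum ℂ A)

theorem LinearIndependent.pair_of_ne {ι R M : Type*} [Semiring R] [AddCommMonoid M] [Module R M]
    {v : ι → M} (hv : LinearIndependent R v) {i j : ι} (hij : i ≠ j) :
    LinearIndependent R ![v i, v j] := by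
  convert hv.comp ![i, j] (by simp [Function.Injective, Fin.forall_fin_two, hij, hij.symm]) using 1
  ext k
  fin_cases k <;> rfl

theorem Matrix.mem_spectrum_of_mulVec_eq_smul {K ι : Type*} [Field K] [Fintype ι]
    [DecidableEq ι] {M : Matrix ι ι K} {μ : K} {v : ι → K} (hv : v ≠ 0) (h : M *ᵥ v = μ • v) :
    μ ∈ spectrum K M := by
  rw [← Matrix.spectrum_toLin']
  exact (Module.End.hasEigenvalue_of_hasEigenvector
    ⟨Module.End.mem_eigenspace_iff.mpr (by simpa using h), hv⟩).mem_spectrum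

theorem rho_nonneg {n : ℕ} (M : Matrix (Fin n) (Fin n) ℂ) : 0 ≤ rho M :=
  Real.sSup_nonneg (by rintro _ ⟨μ, -, rfl⟩; exact norm_nonneg μ)

theorem norm_le_rho_of_mem_spectrum {n : ℕ} {M : Matrix (Fin n) (Fin n) ℂ} {μ : ℂ}
    (h : μ ∈ spectrum ℂ M) : ‖μ‖ ≤ rho M :=
  le_csSup (M.finite_spectrum.image _).bddAbove (Set.mem_image_of_mem _ h)

theorem sqrt_norm_mul_le_rho {n : ℕ} {M : Matrix (Fin n) (Fin n) ℂ} {x y : Fin n → ℂ} {a c : ℂ}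
    (hxy : LinearIndependent ℂ ![x, y]) (hx : M *ᵥ x = a • y) (hy : M *ᵥ y = c • x) :
    √(‖a‖ * ‖c‖) ≤ rho M := by
  rcases eq_or_ne a 0 with rfl | ha
  · simpa using rho_nonneg M
  obtain ⟨μ, hμ⟩ := IsAlgClosed.exists_pow_nat_eq (a * c) two_pos
  have hv : μ • x + a • y ≠ 0 := fun h => ha (LinearIndependent.pair_iff.mp hxy μ a h).2
  have heig : M *ᵥ (μ • x + a • y) = μ • (μ • x + a • y) := by
    rw [mulVec_add, mulVec_smul, mulVec_smul, hx, hy, smul_add, smul_smul, smul_smul, smul_smul,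
      ← sq, hμ, add_comm]
  calc √(‖a‖ * ‖c‖) = ‖μ‖ := by rw [← norm_mul, ← hμ, norm_pow, Real.sqrt_sq (norm_nonneg μ)]
    _ ≤ rho M := norm_le_rho_of_mem_spectrum (mem_spectrum_of_mulVec_eq_smul hv heig)

theorem tendsto_sqrt_norm_mul_norm_one_add_div_norm :
    Tendsto (fun ζ : ℂ => √(‖ζ‖ * ‖1 + ζ‖) / ‖ζ‖) (𝓝[≠] 0) atTop := by
  have hquot : Tendsto (fun ζ : ℂ => ‖1 + ζ‖ * ‖ζ‖⁻¹) (𝓝[≠] 0) atTop := by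
    refine Tendsto.pos_mul_atTop one_pos ?_ tendsto_norm_nhdsNE_zero.inv_tendsto_nhdsGT_zero
    have : Continuous (fun ζ : ℂ => ‖1 + ζ‖) := by fun_prop
    simpa using (this.tendsto 0).mono_left nhdsWithin_le_nhds
  refine (Real.tendsto_sqrt_atTop.comp hquot).congr' ?_
  filter_upwards [self_mem_nhdsWithin] with ζ hζ
  have hζ : 0 < ‖ζ‖ := norm_pos_iff.mpr hζ
  rw [Function.comp_apply, ← Real.sqrt_sq hζ.le, ← Real.sqrt_div' _ (sq_nonneg _),
    Real.sqrt_sq hζ.le]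
  congr 1
  field_simp

/-- in the setting of Statement 8, `ρ(A + ζV) ≥ √(|ζ||1+ζ|)` for all
`ζ ∈ ℂ`, and `ρ(A + ζV)/|ζ| → ∞` as `ζ → 0`. -/
theorem perturbation_rho_lower (n : ℕ) (hn : 2 ≤ n)
    (A V : Matrix (Fin n) (Fin n) ℂ)
    (b : Module.Basis (Fin n) ℂ (Fin n → ℂ))
    (hA1 : A.mulVec (b ⟨1, by omega⟩) = b ⟨0, by omega⟩)
    (hA0 : A.mulVec (b ⟨0, by omega⟩) = 0)
    (hV1 : V.mulVec (b ⟨1, by omega⟩) = b ⟨0, by omega⟩)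
    (hV0 : V.mulVec (b ⟨0, by omega⟩) = b ⟨1, by omega⟩) :
    (∀ ζ : ℂ, Real.sqrt (‖ζ‖ * ‖1 + ζ‖) ≤ rho (A + ζ • V)) ∧
    Tendsto (fun ζ : ℂ => rho (A + ζ • V) / ‖ζ‖)
      (nhdsWithin 0 {0}ᶜ) atTop := by
  have hne : (⟨0, by omega⟩ : Fin n) ≠ ⟨1, by omega⟩ := by simp
  have hlower (ζ : ℂ) : √(‖ζ‖ * ‖1 + ζ‖) ≤ rho (A + ζ • V) := by
    refine sqrt_norm_mul_le_rho (b.linearIndependent.pair_of_ne hne) ?_ ?_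
    · rw [add_mulVec, smul_mulVec, hA0, hV0, zero_add]
    · rw [add_mulVec, smul_mulVec, hA1, hV1, add_smul, one_smul]
  refine ⟨hlower, tendsto_atTop_mono' _ ?_ tendsto_sqrt_norm_mul_norm_one_add_div_norm⟩
  filter_upwards with ζ
  exact div_le_div_of_nonneg_right (hlower ζ) (norm_nonneg ζ)
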